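/- Let U, H be Hopf algebras and R : H ⊗ U → U ⊗ H a normal, multiplicative coalgebra map. Then h ▷ u := ε_H(h^R)u^R defines a left H-module structure on U (i.e. 1_H ▷ u = u and (hh') ▷ u = h ▷ (h' ▷ u)), h ◁ u := ε_U(u^R)h^R defines a right U-module structure on H (i.e. h ◁ 1_U = h and h ◁ (uu') = (h ◁ u) ◁ u'), and for all h ∈ H, u ∈ U one has u^R ⊗ h^R = h₍₁₎ ▷ u₍₁₎ ⊗ h₍₂₎ ◁ u₍₂₎ = h₍₂₎ ▷ u₍₂₎ ⊗ h₍₁₎ ◁ u₍₁₎. -/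
import Mathlib


open TensorProduct

noncomputable section

variable {k : Type*} [Field k]
variable {U : Type*} [Ring U] [HopfAlgebra k U]
variable {H : Type*} [Ring H] [HopfAlgebra k H]

/-- The tensor product comultiplication on `A ⊗ B`:
`a ⊗ b ↦ (a₍₁₎ ⊗ b₍₁₎) ⊗ (a₍₂₎ ⊗ b₍₂₎)`. -/
def comulTP (k A B : Type*) [Field k] [Ring A] [HopfAlgebra k A] [Ring B] [HopfAlgebra k B] :
    A ⊗[k] B →ₗ[k] (A ⊗[k] B) ⊗[k] (A ⊗[k] B) :=
  (TensorProduct.tensorTensorTensorComm k A A B B).toLinearMap ∘ₗ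
    TensorProduct.map (Coalgebra.comul (R := k)) (Coalgebra.comul (R := k))

/-- The tensor product counit on `A ⊗ B`: `a ⊗ b ↦ ε(a)ε(b)`. -/
def counitTP (k A B : Type*) [Field k] [Ring A] [HopfAlgebra k A] [Ring B] [HopfAlgebra k B] :
    A ⊗[k] B →ₗ[k] k :=
  (TensorProduct.lid k k).toLinearMap ∘ₗ
    TensorProduct.map (Coalgebra.counit (R := k)) (Coalgebra.counit (R := k))

/-- `R` is left normal: `R(h ⊗ 1_U) = 1_U ⊗ h`. -/
def LeftNormal (R : H ⊗[k] U →ₗ[k] U ⊗[k] H) : Prop :=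
  ∀ h : H, R (h ⊗ₜ[k] (1 : U)) = (1 : U) ⊗ₜ[k] h

/-- `R` is right normal: `R(1_H ⊗ u) = u ⊗ 1_H`. -/
def RightNormal (R : H ⊗[k] U →ₗ[k] U ⊗[k] H) : Prop :=
  ∀ u : U, R ((1 : H) ⊗ₜ[k] u) = u ⊗ₜ[k] (1 : H)

/-- `R` is left multiplicative: `u^R ⊗ (hh')^R = (u^R)^r ⊗ h^r(h')^R`,
as an equality of linear maps `(H ⊗ H) ⊗ U → U ⊗ H`. -/
def LeftMult (R : H ⊗[k] U →ₗ[k] U ⊗[k] H) : Prop :=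
  R ∘ₗ TensorProduct.map (LinearMap.mul' k H) (LinearMap.id : U →ₗ[k] U) =
    TensorProduct.map (LinearMap.id : U →ₗ[k] U) (LinearMap.mul' k H) ∘ₗ
      (TensorProduct.assoc k U H H).toLinearMap ∘ₗ
      TensorProduct.map R (LinearMap.id : H →ₗ[k] H) ∘ₗ
      (TensorProduct.assoc k H U H).symm.toLinearMap ∘ₗ
      TensorProduct.map (LinearMap.id : H →ₗ[k] H) R ∘ₗ
      (TensorProduct.assoc k H H U).toLinearMap

/-- `R` is right multiplicative: `(uu')^R ⊗ h^R = u^R(u')^r ⊗ (h^R)^r`,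
as an equality of linear maps `H ⊗ (U ⊗ U) → U ⊗ H`. -/
def RightMult (R : H ⊗[k] U →ₗ[k] U ⊗[k] H) : Prop :=
  R ∘ₗ TensorProduct.map (LinearMap.id : H →ₗ[k] H) (LinearMap.mul' k U) =
    TensorProduct.map (LinearMap.mul' k U) (LinearMap.id : H →ₗ[k] H) ∘ₗ
      (TensorProduct.assoc k U U H).symm.toLinearMap ∘ₗ
      TensorProduct.map (LinearMap.id : U →ₗ[k] U) R ∘ₗ
      (TensorProduct.assoc k U H U).toLinearMap ∘ₗ
      TensorProduct.map R (LinearMap.id : U →ₗ[k] U) ∘ₗ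
      (TensorProduct.assoc k H U U).symm.toLinearMap

/-- `R` is a coalgebra map for the tensor product coalgebra structures. -/
def IsCoalgMap (R : H ⊗[k] U →ₗ[k] U ⊗[k] H) : Prop :=
  counitTP k U H ∘ₗ R = counitTP k H U ∧
    comulTP k U H ∘ₗ R = TensorProduct.map R R ∘ₗ comulTP k H U

/-- The left action `h ⊗ u ↦ h ▷ u = ε_H(h^R)u^R`, as a linear map `H ⊗ U → U`. -/
def lact (R : H ⊗[k] U →ₗ[k] U ⊗[k] H) : H ⊗[k] U →ₗ[k] U :=
  (TensorProduct.rid k U).toLinearMap ∘ₗ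
    TensorProduct.map (LinearMap.id : U →ₗ[k] U) (Coalgebra.counit (R := k)) ∘ₗ R

/-- The right action `h ⊗ u ↦ h ◁ u = ε_U(u^R)h^R`, as a linear map `H ⊗ U → H`. -/
def ract (R : H ⊗[k] U →ₗ[k] U ⊗[k] H) : H ⊗[k] U →ₗ[k] H :=
  (TensorProduct.lid k H).toLinearMap ∘ₗ
    TensorProduct.map (Coalgebra.counit (R := k)) (LinearMap.id : H →ₗ[k] H) ∘ₗ R

/-- Helper: apply counit to the second factor. -/
def Amap (k U H : Type*) [Field k] [Ring U] [HopfAlgebra k U] [Ring H] [HopfAlgebra k H] :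
    U ⊗[k] H →ₗ[k] U :=
  (TensorProduct.rid k U).toLinearMap ∘ₗ
    TensorProduct.map (LinearMap.id : U →ₗ[k] U) (Coalgebra.counit (R := k))

/-- Helper: apply counit to the first factor. -/
def Bmap (k U H : Type*) [Field k] [Ring U] [HopfAlgebra k U] [Ring H] [HopfAlgebra k H] :
    U ⊗[k] H →ₗ[k] H :=
  (TensorProduct.lid k H).toLinearMap ∘ₗ
    TensorProduct.map (Coalgebra.counit (R := k)) (LinearMap.id : H →ₗ[k] H)

@[simp] lemma Amap_tmul (u : U) (h : H) :
    Amap k U H (u ⊗ₜ[k] h) = (Coalgebra.counit (R := k) h) • u := by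
  simp [Amap]

@[simp] lemma Bmap_tmul (u : U) (h : H) :
    Bmap k U H (u ⊗ₜ[k] h) = (Coalgebra.counit (R := k) u) • h := by
  simp [Bmap]

lemma lemA : TensorProduct.map (Amap k U H) (Bmap k U H) ∘ₗ comulTP k U H = LinearMap.id := by
  have step1 : TensorProduct.map (Amap k U H) (Bmap k U H) ∘ₗ
      (TensorProduct.tensorTensorTensorComm k U U H H).toLinearMap =
      TensorProduct.map
        ((TensorProduct.rid k U).toLinearMap ∘ₗ (Coalgebra.counit (R := k)).lTensor U)
        ((TensorProduct.lid k H).toLinearMap ∘ₗ (Coalgebra.counit (R := k)).rTensor H) := by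
    ext u₁ u₂ h₁ h₂
    simp [smul_tmul', tmul_smul, smul_smul, mul_comm]
  have hC : ((TensorProduct.rid k U).toLinearMap ∘ₗ (Coalgebra.counit (R := k)).lTensor U)
      ∘ₗ (Coalgebra.comul (R := k) (A := U)) = LinearMap.id := by
    apply LinearMap.ext; intro a
    simp [Coalgebra.lTensor_counit_comul]
  have hD : ((TensorProduct.lid k H).toLinearMap ∘ₗ (Coalgebra.counit (R := k)).rTensor H)
      ∘ₗ (Coalgebra.comul (R := k) (A := H)) = LinearMap.id := by
    apply LinearMap.ext; intro a
    simp [Coalgebra.rTensor_counit_comul]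
  rw [comulTP, ← LinearMap.comp_assoc, step1, ← TensorProduct.map_comp, hC, hD,
    TensorProduct.map_id]

lemma lemB : TensorProduct.map (Bmap k U H) (Amap k U H) ∘ₗ comulTP k U H =
    (TensorProduct.comm k U H).toLinearMap := by
  have step1 : TensorProduct.map (Bmap k U H) (Amap k U H) ∘ₗ
      (TensorProduct.tensorTensorTensorComm k U U H H).toLinearMap =
      (TensorProduct.comm k U H).toLinearMap ∘ₗ
      TensorProduct.map
        ((TensorProduct.lid k U).toLinearMap ∘ₗ (Coalgebra.counit (R := k)).rTensor U)
        ((TensorProduct.rid k H).toLinearMap ∘ₗ (Coalgebra.counit (R := k)).lTensor H) := by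
    ext u₁ u₂ h₁ h₂
    simp [smul_tmul', tmul_smul, smul_smul, mul_comm]
  have hC : ((TensorProduct.lid k U).toLinearMap ∘ₗ (Coalgebra.counit (R := k)).rTensor U)
      ∘ₗ (Coalgebra.comul (R := k) (A := U)) = LinearMap.id := by
    apply LinearMap.ext; intro a
    simp [Coalgebra.rTensor_counit_comul]
  have hD : ((TensorProduct.rid k H).toLinearMap ∘ₗ (Coalgebra.counit (R := k)).lTensor H)
      ∘ₗ (Coalgebra.comul (R := k) (A := H)) = LinearMap.id := by
    apply LinearMap.ext; intro a
    simp [Coalgebra.lTensor_counit_comul]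
  rw [comulTP, ← LinearMap.comp_assoc, step1, LinearMap.comp_assoc,
    ← TensorProduct.map_comp, hC, hD, TensorProduct.map_id, LinearMap.comp_id]

set_option maxHeartbeats 1600000 in
set_option synthInstance.maxHeartbeats 800000 in
/-- STATEMENT 11: for a normal, multiplicative coalgebra map `R : H ⊗ U → U ⊗ H`,
`h ▷ u := ε_H(h^R)u^R` is a left `H`-module structure on `U`, `h ◁ u := ε_U(u^R)h^R` is a
right `U`-module structure on `H`, and
`u^R ⊗ h^R = h₍₁₎ ▷ u₍₁₎ ⊗ h₍₂₎ ◁ u₍₂₎ = h₍₂₎ ▷ u₍₂₎ ⊗ h₍₁₎ ◁ u₍₁₎`. -/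
theorem smash_actions (R : H ⊗[k] U →ₗ[k] U ⊗[k] H)
    (hln : LeftNormal R) (hrn : RightNormal R)
    (hlm : LeftMult R) (hrm : RightMult R) (hcm : IsCoalgMap R) :
    (∀ u : U, lact R ((1 : H) ⊗ₜ[k] u) = u) ∧
    (∀ (h h' : H) (u : U),
      lact R ((h * h') ⊗ₜ[k] u) = lact R (h ⊗ₜ[k] lact R (h' ⊗ₜ[k] u))) ∧
    (∀ h : H, ract R (h ⊗ₜ[k] (1 : U)) = h) ∧
    (∀ (h : H) (u u' : U),
      ract R (h ⊗ₜ[k] (u * u')) = ract R (ract R (h ⊗ₜ[k] u) ⊗ₜ[k] u')) ∧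
    (R = TensorProduct.map (lact R) (ract R) ∘ₗ comulTP k H U) ∧
    (R = (TensorProduct.comm k H U).toLinearMap ∘ₗ
      TensorProduct.map (ract R) (lact R) ∘ₗ comulTP k H U) := by
  have hlA : lact R = Amap k U H ∘ₗ R := rfl
  have hrB : ract R = Bmap k U H ∘ₗ R := rfl
  refine ⟨?_, ?_, ?_, ?_, ?_, ?_⟩
  · intro u
    rw [hlA]
    simp [hrn u]
  · intro h h' u
    have key := LinearMap.congr_fun hlm ((h ⊗ₜ[k] h') ⊗ₜ[k] u)
    simp only [LinearMap.comp_apply, TensorProduct.map_tmul, LinearMap.mul'_apply,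
      LinearMap.id_coe, id_eq, LinearEquiv.coe_coe, TensorProduct.assoc_tmul] at key
    simp only [hlA, LinearMap.comp_apply]
    rw [key]
    generalize R (h' ⊗ₜ[k] u) = t
    induction t using TensorProduct.induction_on with
    | zero => simp
    | tmul x a =>
      simp only [TensorProduct.assoc_symm_tmul, TensorProduct.map_tmul, LinearMap.id_coe,
        id_eq, Amap_tmul, tmul_smul, map_smul, LinearEquiv.coe_coe]
      generalize R (h ⊗ₜ[k] x) = s
      induction s using TensorProduct.induction_on with
      | zero => simp
      | tmul y b =>
        simp [Bialgebra.counit_mul, mul_comm, mul_smul]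
      | add s₁ s₂ ih₁ ih₂ =>
        simp only [add_tmul, map_add, smul_add, ih₁, ih₂]
    | add t₁ t₂ ih₁ ih₂ =>
      simp only [tmul_add, map_add, ih₁, ih₂]
  · intro h
    rw [hrB]
    simp [hln h]
  · intro h u u'
    have key := LinearMap.congr_fun hrm (h ⊗ₜ[k] (u ⊗ₜ[k] u'))
    simp only [LinearMap.comp_apply, TensorProduct.map_tmul, LinearMap.mul'_apply,
      LinearMap.id_coe, id_eq, LinearEquiv.coe_coe, TensorProduct.assoc_symm_tmul] at key
    simp only [hrB, LinearMap.comp_apply]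
    rw [key]
    generalize R (h ⊗ₜ[k] u) = t
    induction t using TensorProduct.induction_on with
    | zero => simp
    | tmul x a =>
      simp only [TensorProduct.assoc_tmul, TensorProduct.map_tmul, LinearMap.id_coe,
        id_eq, Bmap_tmul, ← TensorProduct.smul_tmul', map_smul, LinearEquiv.coe_coe]
      generalize R (a ⊗ₜ[k] u') = s
      induction s using TensorProduct.induction_on with
      | zero => simp
      | tmul y b =>
        simp [Bialgebra.counit_mul, mul_comm, mul_smul]
      | add s₁ s₂ ih₁ ih₂ =>
        simp only [tmul_add, map_add, smul_add, ih₁, ih₂]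
    | add t₁ t₂ ih₁ ih₂ =>
      simp only [add_tmul, map_add, ih₁, ih₂]
  · calc R = LinearMap.id ∘ₗ R := (LinearMap.id_comp R).symm
    _ = (TensorProduct.map (Amap k U H) (Bmap k U H) ∘ₗ comulTP k U H) ∘ₗ R := by rw [lemA]
    _ = TensorProduct.map (Amap k U H) (Bmap k U H) ∘ₗ (comulTP k U H ∘ₗ R) := by
        rw [LinearMap.comp_assoc]
    _ = TensorProduct.map (Amap k U H) (Bmap k U H) ∘ₗ
        (TensorProduct.map R R ∘ₗ comulTP k H U) := by rw [hcm.2]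
    _ = (TensorProduct.map (Amap k U H) (Bmap k U H) ∘ₗ TensorProduct.map R R) ∘ₗ
        comulTP k H U := by rw [LinearMap.comp_assoc]
    _ = TensorProduct.map (lact R) (ract R) ∘ₗ comulTP k H U := by
        rw [← TensorProduct.map_comp, ← hlA, ← hrB]
  · have h6 : (TensorProduct.comm k U H).toLinearMap ∘ₗ R =
        TensorProduct.map (ract R) (lact R) ∘ₗ comulTP k H U := by
      calc (TensorProduct.comm k U H).toLinearMap ∘ₗ R
          = (TensorProduct.map (Bmap k U H) (Amap k U H) ∘ₗ comulTP k U H) ∘ₗ R := by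
            rw [lemB]
        _ = TensorProduct.map (Bmap k U H) (Amap k U H) ∘ₗ (comulTP k U H ∘ₗ R) := by
            rw [LinearMap.comp_assoc]
        _ = TensorProduct.map (Bmap k U H) (Amap k U H) ∘ₗ
            (TensorProduct.map R R ∘ₗ comulTP k H U) := by rw [hcm.2]
        _ = (TensorProduct.map (Bmap k U H) (Amap k U H) ∘ₗ TensorProduct.map R R) ∘ₗ
            comulTP k H U := by rw [LinearMap.comp_assoc]
        _ = TensorProduct.map (ract R) (lact R) ∘ₗ comulTP k H U := by
            rw [← TensorProduct.map_comp, ← hlA, ← hrB]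
    have hcc : (TensorProduct.comm k H U).toLinearMap ∘ₗ
        (TensorProduct.comm k U H).toLinearMap = (LinearMap.id : U ⊗[k] H →ₗ[k] U ⊗[k] H) := by
      ext u h; rfl
    rw [← h6, ← LinearMap.comp_assoc, hcc, LinearMap.id_comp]
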